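/- Nonthermalization theorem (nondegenerate case): Let Ĥ be a nondegenerate Hamiltonian on H_S ⊗ H_B with eigenbasis |E_k⟩. For i = 1,2 let ψ₀^{(i)} = ψ₀^{S(i)} ⊗ φ₀^{B(i)} be pure product initial states with reduced time-averaged states ω^{S(i)} = Σ_k |c_k^{(i)}|² Tr_B|E_k⟩⟨E_k|, where c_k^{(i)} = ⟨E_k|ψ₀^{(i)}⟩. Then D(ω^{S(1)}, ω^{S(2)}) ≥ D(ψ₀^{S(1)}, ψ₀^{S(2)}) − R(ψ₀^{(1)}) − R(ψ₀^{(2)}). -/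

import Mathlib

/-! The time-averaged reduced state `ω^S` is a convex combination of the reduced eigenstates
`Tr_B |E_k⟩⟨E_k|` with weights `|c_k|²`, which sum to `1` by Parseval's identity in the
orthonormal basis `E`. Convexity of the trace distance then gives `D(ω^S, ψ₀^S) ≤ R(ψ₀)`, and the
triangle inequality through `ω^{S(1)}` and `ω^{S(2)}` yields the claim.

All of this rests on the triangle inequality for the trace norm of Hermitian matrices. In the
eigenbasis `U` of `A + B`, `‖A + B‖₁` is the sum of the absolute diagonal entries of
`Uᴴ (A + B) U`. For Hermitian `A`, each diagonal entry of `Uᴴ A U` is a combination of the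
eigenvalues of `A` whose weights are the squared moduli of a column of a unitary matrix, so the
absolute diagonal entries of `Uᴴ A U` sum to at most `∑ |λ_j(A)| = ‖A‖₁`. -/

open Matrix MeasureTheory Filter
open scoped ComplexOrder Kronecker

noncomputable def traceNorm {n : Type*} [Fintype n] [DecidableEq n] (A : Matrix n n ℂ) : ℝ :=
  (((Matrix.posSemidef_conjTranspose_mul_self A).1.eigenvectorUnitary.1 *
      diagonal (((↑) : ℝ → ℂ) ∘ (√·) ∘ (Matrix.posSemidef_conjTranspose_mul_self A).1.eigenvalues) *
      (star (Matrix.posSemidef_conjTranspose_mul_self A).1.eigenvectorUnitary :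
        Matrix n n ℂ)).trace).re

/-- Trace distance `D(ρ,σ) = ‖ρ-σ‖₁/2`. -/
noncomputable def traceDist {n : Type*} [Fintype n] [DecidableEq n] (ρ σ : Matrix n n ℂ) : ℝ :=
  traceNorm (ρ - σ) / 2

/-- A density matrix: positive semidefinite with unit trace. -/
def IsDensity {n : Type*} [Fintype n] [DecidableEq n] (ρ : Matrix n n ℂ) : Prop :=
  ρ.PosSemidef ∧ ρ.trace = 1

/-- Outer product `|v⟩⟨w|`. -/
noncomputable def outer {n : Type*} (v w : n → ℂ) : Matrix n n ℂ := Matrix.vecMulVec v (star w)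

/-- Partial trace over the bath `B`. -/
noncomputable def ptraceB {dS dB : ℕ} (ρ : Matrix (Fin dS × Fin dB) (Fin dS × Fin dB) ℂ) :
    Matrix (Fin dS) (Fin dS) ℂ := Matrix.of fun i j => ∑ b, ρ (i, b) (j, b)

/-- Product vector `s ⊗ φ` on the bipartite space `S ⊗ B`. -/
noncomputable def prodVec {dS dB : ℕ} (s : Fin dS → ℂ) (φ : Fin dB → ℂ) :
    Fin dS × Fin dB → ℂ := fun p => s p.1 * φ p.2

section TraceNorm

variable {n : Type*} [Fintype n] [DecidableEq n]

lemma traceNorm_eq_re_trace_cfc_sqrt (A : Matrix n n ℂ) :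
    traceNorm A = (cfc Real.sqrt (Aᴴ * A)).trace.re := by
  rw [(posSemidef_conjTranspose_mul_self A).1.cfc_eq]
  rfl

lemma Matrix.IsHermitian.trace_cfc {A : Matrix n n ℂ} (hA : A.IsHermitian) (f : ℝ → ℝ) :
    (hA.cfc f).trace = ∑ i, (f (hA.eigenvalues i) : ℂ) := by
  rw [IsHermitian.cfc, Unitary.conjStarAlgAut_apply, trace_mul_cycle, Unitary.coe_star_mul_self,
    one_mul, trace_diagonal]
  rfl

lemma Matrix.IsHermitian.traceNorm_eq_sum_abs_eigenvalues {A : Matrix n n ℂ} (hA : A.IsHermitian) :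
    traceNorm A = ∑ i, |hA.eigenvalues i| := by
  have hsqrt_sq : (fun x : ℝ => √(x ^ 2)) = fun x => |x| := funext Real.sqrt_sq_eq_abs
  rw [traceNorm_eq_re_trace_cfc_sqrt, hA.eq, ← sq, ← cfc_pow_id (R := ℝ) A 2 hA.isSelfAdjoint,
    ← cfc_comp' Real.sqrt (· ^ 2) A (ha := hA.isSelfAdjoint), hsqrt_sq, hA.cfc_eq, hA.trace_cfc,
    Complex.re_sum]
  simp

lemma sum_norm_sq_apply_of_mem_unitaryGroup {W : Matrix n n ℂ} (hW : W ∈ unitaryGroup n ℂ)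
    (j : n) : ∑ i, ‖W j i‖ ^ 2 = 1 := by
  have hjj : (W * star W) j j = (1 : Matrix n n ℂ) j j := by
    rw [Unitary.mul_star_self_of_mem hW]
  simp only [mul_apply, star_apply, one_apply_eq, Complex.star_def, Complex.mul_conj,
    Complex.normSq_eq_norm_sq] at hjj
  exact_mod_cast hjj

lemma norm_conjTranspose_mul_diagonal_mul_apply_le (W : Matrix n n ℂ) (d : n → ℝ) (i : n) :
    ‖(Wᴴ * diagonal (fun j => (d j : ℂ)) * W) i i‖ ≤ ∑ j, |d j| * ‖W j i‖ ^ 2 := by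
  rw [mul_assoc, mul_apply]
  refine (norm_sum_le _ _).trans_eq (Finset.sum_congr rfl fun j _ => ?_)
  rw [diagonal_mul, conjTranspose_apply, norm_mul, norm_mul, norm_star, Complex.norm_real,
    Real.norm_eq_abs]
  ring

lemma Matrix.IsHermitian.sum_norm_diag_conj_le_traceNorm {A : Matrix n n ℂ} (hA : A.IsHermitian)
    {U : Matrix n n ℂ} (hU : U ∈ unitaryGroup n ℂ) :
    ∑ i, ‖(Uᴴ * A * U) i i‖ ≤ traceNorm A := by
  set V := hA.eigenvectorUnitary
  set W : Matrix n n ℂ := star (V : Matrix n n ℂ) * U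
  have hW : W ∈ unitaryGroup n ℂ := Submonoid.mul_mem _ (Unitary.star_mem V.2) hU
  have hconj : Uᴴ * A * U = Wᴴ * diagonal (fun j => (hA.eigenvalues j : ℂ)) * W := by
    conv_lhs => rw [hA.spectral_theorem, Unitary.conjStarAlgAut_apply]
    simp only [W, conjTranspose_mul, star_eq_conjTranspose, conjTranspose_conjTranspose]
    noncomm_ring
  calc ∑ i, ‖(Uᴴ * A * U) i i‖
      ≤ ∑ i, ∑ j, |hA.eigenvalues j| * ‖W j i‖ ^ 2 := by
        rw [hconj]
        exact Finset.sum_le_sum fun i _ => norm_conjTranspose_mul_diagonal_mul_apply_le W _ i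
    _ = ∑ j, |hA.eigenvalues j| := by
        rw [Finset.sum_comm]
        simp only [← Finset.mul_sum, sum_norm_sq_apply_of_mem_unitaryGroup hW, mul_one]
    _ = traceNorm A := hA.traceNorm_eq_sum_abs_eigenvalues.symm

lemma Matrix.IsHermitian.traceNorm_add_le {A B : Matrix n n ℂ} (hA : A.IsHermitian)
    (hB : B.IsHermitian) : traceNorm (A + B) ≤ traceNorm A + traceNorm B := by
  have hAB := hA.add hB
  set U : Matrix n n ℂ := (hAB.eigenvectorUnitary : Matrix n n ℂ)
  have hU : U ∈ unitaryGroup n ℂ := hAB.eigenvectorUnitary.2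
  have hdiag : Uᴴ * (A + B) * U = diagonal (fun i => (hAB.eigenvalues i : ℂ)) := by
    have := hAB.conjStarAlgAut_star_eigenvectorUnitary
    rwa [Unitary.conjStarAlgAut_star_apply] at this
  calc traceNorm (A + B) = ∑ i, ‖(Uᴴ * (A + B) * U) i i‖ := by
        simp [hdiag, hAB.traceNorm_eq_sum_abs_eigenvalues]
    _ ≤ ∑ i, (‖(Uᴴ * A * U) i i‖ + ‖(Uᴴ * B * U) i i‖) := by
        refine Finset.sum_le_sum fun i _ => ?_
        rw [mul_add, add_mul]
        exact norm_add_le _ _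
    _ ≤ traceNorm A + traceNorm B := by
        rw [Finset.sum_add_distrib]
        exact add_le_add (hA.sum_norm_diag_conj_le_traceNorm hU)
          (hB.sum_norm_diag_conj_le_traceNorm hU)

@[simp]
lemma traceNorm_zero : traceNorm (0 : Matrix n n ℂ) = 0 := by
  simp [traceNorm_eq_re_trace_cfc_sqrt]

@[simp]
lemma traceNorm_neg (A : Matrix n n ℂ) : traceNorm (-A) = traceNorm A := by
  simp [traceNorm_eq_re_trace_cfc_sqrt]

lemma traceNorm_ofReal_smul {c : ℝ} (hc : 0 ≤ c) (A : Matrix n n ℂ) :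
    traceNorm ((c : ℂ) • A) = c * traceNorm A := by
  have hsq : ((c : ℂ) • A)ᴴ * ((c : ℂ) • A) = (c ^ 2 : ℝ) • (Aᴴ * A) := by
    rw [conjTranspose_smul, Complex.star_def, Complex.conj_ofReal, smul_mul_smul_comm,
      ← Complex.ofReal_mul, ← sq, ← Complex.coe_smul]
  have hsqrt : (fun x : ℝ => √(c ^ 2 * x)) = fun x => c * √x :=
    funext fun x => by rw [Real.sqrt_mul (sq_nonneg c), Real.sqrt_sq hc]
  rw [traceNorm_eq_re_trace_cfc_sqrt, traceNorm_eq_re_trace_cfc_sqrt, hsq,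
    ← cfc_comp_const_mul (c ^ 2) Real.sqrt (Aᴴ * A)
      (ha := (posSemidef_conjTranspose_mul_self A).1.isSelfAdjoint),
    hsqrt, cfc_const_mul c Real.sqrt (Aᴴ * A), trace_smul, Complex.smul_re, smul_eq_mul]

lemma traceNorm_sum_le {ι : Type*} (s : Finset ι) {A : ι → Matrix n n ℂ}
    (hA : ∀ i ∈ s, (A i).IsHermitian) : traceNorm (∑ i ∈ s, A i) ≤ ∑ i ∈ s, traceNorm (A i) :=
  Finset.le_sum_of_subadditive_on_pred traceNorm IsHermitian traceNorm_zero.le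
    (fun _ _ => IsHermitian.traceNorm_add_le) (fun _ _ => IsHermitian.add) A hA

end TraceNorm

section TraceDist

variable {n : Type*} [Fintype n] [DecidableEq n]

lemma traceDist_comm (ρ σ : Matrix n n ℂ) : traceDist ρ σ = traceDist σ ρ := by
  rw [traceDist, traceDist, ← traceNorm_neg, neg_sub]

lemma traceDist_triangle {ρ σ τ : Matrix n n ℂ} (hρ : ρ.IsHermitian) (hσ : σ.IsHermitian)
    (hτ : τ.IsHermitian) : traceDist ρ τ ≤ traceDist ρ σ + traceDist σ τ := by
  have h := (hρ.sub hσ).traceNorm_add_le (hσ.sub hτ)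
  rw [sub_add_sub_cancel] at h
  simp only [traceDist]
  linarith

lemma traceDist_sum_smul_le {ι : Type*} [Fintype ι] {p : ι → ℝ} (hp : ∀ i, 0 ≤ p i)
    (hp_sum : ∑ i, p i = 1) {ρ : ι → Matrix n n ℂ} (hρ : ∀ i, (ρ i).IsHermitian)
    {σ : Matrix n n ℂ} (hσ : σ.IsHermitian) :
    traceDist (∑ i, (p i : ℂ) • ρ i) σ ≤ ∑ i, p i * traceDist (ρ i) σ := by
  have hdecomp : ∑ i, (p i : ℂ) • ρ i - σ = ∑ i, (p i : ℂ) • (ρ i - σ) := by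
    simp only [smul_sub, Finset.sum_sub_distrib, ← Finset.sum_smul, ← Complex.ofReal_sum, hp_sum,
      Complex.ofReal_one, one_smul]
  have hsum := traceNorm_sum_le Finset.univ fun i _ =>
    ((hρ i).sub hσ).smul (k := (p i : ℂ)) (Complex.conj_ofReal (p i))
  simp only [traceNorm_ofReal_smul (hp _)] at hsum
  rw [traceDist, hdecomp]
  calc _ ≤ (∑ i, p i * traceNorm (ρ i - σ)) / 2 := by gcongr
    _ = _ := by simp only [traceDist, Finset.sum_div, mul_div_assoc]

end TraceDist

lemma outer_self_isHermitian {n : Type*} (v : n → ℂ) : (outer v v).IsHermitian := by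
  ext i j
  simp [outer, vecMulVec_apply, mul_comm]

lemma Matrix.IsHermitian.ptraceB {dS dB : ℕ} {ρ : Matrix (Fin dS × Fin dB) (Fin dS × Fin dB) ℂ}
    (hρ : ρ.IsHermitian) : (ptraceB ρ).IsHermitian := by
  ext i j
  simp only [_root_.ptraceB, conjTranspose_apply, of_apply, star_sum]
  exact Finset.sum_congr rfl fun b _ => hρ.apply (i, b) (j, b)

lemma star_prodVec_dotProduct_prodVec {dS dB : ℕ} (s : Fin dS → ℂ) (φ : Fin dB → ℂ) :
    star (prodVec s φ) ⬝ᵥ prodVec s φ = (star s ⬝ᵥ s) * (star φ ⬝ᵥ φ) := by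
  simp only [dotProduct, Finset.sum_mul_sum, Fintype.sum_prod_type, prodVec, Pi.star_apply,
    star_mul']
  exact Finset.sum_congr rfl fun i _ => Finset.sum_congr rfl fun j _ => by ring

lemma sum_norm_sq_star_dotProduct {ι m : Type*} [Fintype ι] [DecidableEq ι] [Fintype m]
    {e : ι → m → ℂ} (he : ∀ k l, star (e k) ⬝ᵥ e l = if k = l then 1 else 0)
    (hcard : Fintype.card ι = Fintype.card m) (ψ : m → ℂ) :
    ∑ k, ‖star (e k) ⬝ᵥ ψ‖ ^ 2 = (star ψ ⬝ᵥ ψ).re := by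
  have hon : Orthonormal ℂ fun k => WithLp.toLp 2 (e k) := by
    rw [orthonormal_iff_ite]
    intro k l
    rw [EuclideanSpace.inner_toLp_toLp, dotProduct_comm, he]
  have hspan : ⊤ ≤ Submodule.span ℂ (Set.range fun k => WithLp.toLp 2 (e k)) :=
    (hon.linearIndependent.span_eq_top_of_card_eq_finrank'
      (by rw [finrank_euclideanSpace, hcard])).ge
  have := (OrthonormalBasis.mk hon hspan).sum_sq_norm_inner_right (WithLp.toLp 2 ψ)
  simp only [OrthonormalBasis.coe_mk, EuclideanSpace.inner_toLp_toLp] at this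
  rw [@norm_sq_eq_re_inner ℂ, EuclideanSpace.inner_toLp_toLp, dotProduct_comm] at this
  simpa only [dotProduct_comm ψ, RCLike.re_to_complex] using this

lemma isHermitian_sum_ofReal_smul {n ι : Type*} [Fintype ι] (p : ι → ℝ) {ρ : ι → Matrix n n ℂ}
    (hρ : ∀ i, (ρ i).IsHermitian) : (∑ i, (p i : ℂ) • ρ i).IsHermitian :=
  isSelfAdjoint_sum _ fun i _ => (hρ i).smul (Complex.conj_ofReal (p i))

lemma traceDist_reducedAverage_le {dS dB : ℕ} {ι : Type*} [Fintype ι] [DecidableEq ι]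
    {E : ι → Fin dS × Fin dB → ℂ} (horth : ∀ k l, star (E k) ⬝ᵥ E l = if k = l then 1 else 0)
    (hcard : Fintype.card ι = dS * dB) {s : Fin dS → ℂ} {φ : Fin dB → ℂ}
    (hs : star s ⬝ᵥ s = 1) (hφ : star φ ⬝ᵥ φ = 1) {c : ι → ℂ}
    (hc : ∀ k, c k = star (E k) ⬝ᵥ prodVec s φ) :
    traceDist (∑ k, ((‖c k‖ ^ 2 : ℝ) : ℂ) • ptraceB (outer (E k) (E k))) (outer s s) ≤
      ∑ k, ‖c k‖ ^ 2 * traceDist (ptraceB (outer (E k) (E k))) (outer s s) := by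
  have hweights : ∑ k, ‖c k‖ ^ 2 = 1 := by
    simp only [hc]
    rw [sum_norm_sq_star_dotProduct horth (by simp [hcard]), star_prodVec_dotProduct_prodVec, hs,
      hφ, mul_one, Complex.one_re]
  exact traceDist_sum_smul_le (fun _ => sq_nonneg _) hweights
    (fun k => (outer_self_isHermitian (E k)).ptraceB) (outer_self_isHermitian s)

theorem nonthermalization_nondegenerate_general {dS dB : ℕ}
    (E : Fin (dS * dB) → (Fin dS × Fin dB → ℂ))
    (horth : ∀ k l, star (E k) ⬝ᵥ E l = if k = l then 1 else 0)
    (s₁ s₂ : Fin dS → ℂ) (hs₁ : star s₁ ⬝ᵥ s₁ = 1) (hs₂ : star s₂ ⬝ᵥ s₂ = 1)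
    (φ₁ φ₂ : Fin dB → ℂ) (hφ₁ : star φ₁ ⬝ᵥ φ₁ = 1) (hφ₂ : star φ₂ ⬝ᵥ φ₂ = 1)
    (c₁ c₂ : Fin (dS * dB) → ℂ)
    (hc₁ : ∀ k, c₁ k = star (E k) ⬝ᵥ prodVec s₁ φ₁)
    (hc₂ : ∀ k, c₂ k = star (E k) ⬝ᵥ prodVec s₂ φ₂)
    (ωS₁ ωS₂ : Matrix (Fin dS) (Fin dS) ℂ)
    (hωS₁ : ωS₁ = ∑ k, ((‖c₁ k‖ ^ 2 : ℝ) : ℂ) • ptraceB (outer (E k) (E k)))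
    (hωS₂ : ωS₂ = ∑ k, ((‖c₂ k‖ ^ 2 : ℝ) : ℂ) • ptraceB (outer (E k) (E k)))
    (R₁ R₂ : ℝ)
    (hR₁ : R₁ = ∑ k, ‖c₁ k‖ ^ 2 *
      traceDist (ptraceB (outer (E k) (E k))) (outer s₁ s₁))
    (hR₂ : R₂ = ∑ k, ‖c₂ k‖ ^ 2 *
      traceDist (ptraceB (outer (E k) (E k))) (outer s₂ s₂)) :
    traceDist ωS₁ ωS₂ ≥ traceDist (outer s₁ s₁) (outer s₂ s₂) - R₁ - R₂ := by
  have hcard : Fintype.card (Fin (dS * dB)) = dS * dB := Fintype.card_fin _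
  have h₁ : traceDist ωS₁ (outer s₁ s₁) ≤ R₁ :=
    hωS₁ ▸ hR₁ ▸ traceDist_reducedAverage_le horth hcard hs₁ hφ₁ hc₁
  have h₂ : traceDist ωS₂ (outer s₂ s₂) ≤ R₂ :=
    hωS₂ ▸ hR₂ ▸ traceDist_reducedAverage_le horth hcard hs₂ hφ₂ hc₂
  have hX k : (ptraceB (outer (E k) (E k))).IsHermitian := (outer_self_isHermitian (E k)).ptraceB
  have hω₁ : ωS₁.IsHermitian := hωS₁ ▸ isHermitian_sum_ofReal_smul _ hX
  have hω₂ : ωS₂.IsHermitian := hωS₂ ▸ isHermitian_sum_ofReal_smul _ hX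
  have hψ₁ := outer_self_isHermitian s₁
  have hψ₂ := outer_self_isHermitian s₂
  suffices traceDist (outer s₁ s₁) (outer s₂ s₂) ≤ R₁ + traceDist ωS₁ ωS₂ + R₂ by linarith
  calc traceDist (outer s₁ s₁) (outer s₂ s₂)
      ≤ traceDist (outer s₁ s₁) ωS₁ + traceDist ωS₁ ωS₂ + traceDist ωS₂ (outer s₂ s₂) := by
        grw [traceDist_triangle hψ₁ hω₁ hψ₂, traceDist_triangle hω₁ hω₂ hψ₂, add_assoc]
    _ ≤ R₁ + traceDist ωS₁ ωS₂ + R₂ := by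
        rw [traceDist_comm (outer s₁ s₁)]
        gcongr

/-- Nonthermalization theorem (nondegenerate case): the reduced time-averaged states of two
pure product initial states remain distinguishable,
`D(ω^{S(1)}, ω^{S(2)}) ≥ D(ψ₀^{S(1)}, ψ₀^{S(2)}) − R(ψ₀^{(1)}) − R(ψ₀^{(2)})`. -/
theorem nonthermalization_nondegenerate {dS dB : ℕ}
    (H : Matrix (Fin dS × Fin dB) (Fin dS × Fin dB) ℂ)
    (E : Fin (dS * dB) → (Fin dS × Fin dB → ℂ)) (Ek : Fin (dS * dB) → ℝ)
    (horth : ∀ k l, star (E k) ⬝ᵥ E l = if k = l then 1 else 0)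
    (heig : ∀ k, H.mulVec (E k) = (Ek k : ℂ) • E k)
    (hnondeg : Function.Injective Ek)
    (s₁ s₂ : Fin dS → ℂ) (hs₁ : star s₁ ⬝ᵥ s₁ = 1) (hs₂ : star s₂ ⬝ᵥ s₂ = 1)
    (φ₁ φ₂ : Fin dB → ℂ) (hφ₁ : star φ₁ ⬝ᵥ φ₁ = 1) (hφ₂ : star φ₂ ⬝ᵥ φ₂ = 1)
    (c₁ c₂ : Fin (dS * dB) → ℂ)
    (hc₁ : ∀ k, c₁ k = star (E k) ⬝ᵥ prodVec s₁ φ₁)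
    (hc₂ : ∀ k, c₂ k = star (E k) ⬝ᵥ prodVec s₂ φ₂)
    (ωS₁ ωS₂ : Matrix (Fin dS) (Fin dS) ℂ)
    (hωS₁ : ωS₁ = ∑ k, ((‖c₁ k‖ ^ 2 : ℝ) : ℂ) • ptraceB (outer (E k) (E k)))
    (hωS₂ : ωS₂ = ∑ k, ((‖c₂ k‖ ^ 2 : ℝ) : ℂ) • ptraceB (outer (E k) (E k)))
    (R₁ R₂ : ℝ)
    (hR₁ : R₁ = ∑ k, ‖c₁ k‖ ^ 2 *
      traceDist (ptraceB (outer (E k) (E k))) (outer s₁ s₁))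
    (hR₂ : R₂ = ∑ k, ‖c₂ k‖ ^ 2 *
      traceDist (ptraceB (outer (E k) (E k))) (outer s₂ s₂)) :
    traceDist ωS₁ ωS₂ ≥ traceDist (outer s₁ s₁) (outer s₂ s₂) - R₁ - R₂ :=
  nonthermalization_nondegenerate_general E horth s₁ s₂ hs₁ hs₂ φ₁ φ₂ hφ₁ hφ₂ c₁ c₂ hc₁ hc₂ ωS₁ ωS₂
    hωS₁ hωS₂ R₁ R₂ hR₁ hR₂
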